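/- arXiv:2201.01802 — 2 statements merged into one kernel-verified Lean document; each statement's English description precedes it below -/
import Mathlib

section
/- Let N be even and let γ^0, …, γ^{N-1} be d×d complex matrices satisfying the Clifford relations γ^μ γ^ν + γ^ν γ^μ = 2 g^{μν} 1_d. Then the 2^N matrices G^r obtained as products γ^{μ_1} ⋯ γ^{μ_p} over all strictly increasing tuples (including the empty product 1_d) are linearly independent over ℂ; consequently d^2 ≥ 2^N, i.e. d ≥ 2^{N/2}. -/
/-!
Write `G S = orderedProd γ S`. Each `G S` squares to a nonzero scalar, so `tr (G S * G S) ≠ 0`.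
Moving `γ ρ` across `G S * G T` costs the sign `(-1) ^ (#(S.erase ρ) + #(T.erase ρ))`. For
`S ≠ T` this sign is `-1` for a suitable `ρ`: one in exactly one of `S`, `T` if `#S + #T` is
even, one in both or neither otherwise (which exists, as `T = Sᶜ` would give `#S + #T = N`).
Since `γ ρ` is invertible, cyclicity of the trace then forces `tr (G S * G T) = 0`. So the
`G S` are orthogonal and non-isotropic for the trace form, hence linearly independent, and
`2 ^ N ≤ d ^ 2`.
-/

open Finset Matrix

variable {ι K A : Type*}

def orderedProd [LinearOrder ι] [Monoid A] (e : ι → A) (S : Finset ι) : A :=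
  ((S.sort (· ≤ ·)).map e).prod

section Anticommuting

variable [CommRing K] [Ring A] [Algebra K A] {e : ι → A}

theorem mul_list_prod_map_eq_neg_one_pow_smul [DecidableEq ι]
    (hanti : ∀ i j, i ≠ j → e i * e j = -(e j * e i)) (ρ : ι) :
    ∀ l : List ι, e ρ * (l.map e).prod =
      (-1 : K) ^ l.countP (· ≠ ρ) • ((l.map e).prod * e ρ)
  | [] => by simp
  | a :: t => by
    have ih := mul_list_prod_map_eq_neg_one_pow_smul hanti ρ t
    simp only [List.map_cons, List.prod_cons, List.countP_cons, pow_add, mul_smul]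
    by_cases ha : a = ρ
    · subst ha
      simp only [ne_eq, not_true_eq_false, decide_false, Bool.false_eq_true, if_false, pow_zero,
        one_smul]
      rw [mul_assoc, ih, mul_smul_comm]
    · rw [← mul_assoc, hanti ρ a (Ne.symm ha), neg_mul, mul_assoc, ih]
      simp [ha, mul_assoc]

theorem exists_list_prod_map_mul_self_eq_smul_one [IsDomain K]
    (hanti : ∀ i j, i ≠ j → e i * e j = -(e j * e i))
    (hsq : ∀ i, ∃ q : K, q ≠ 0 ∧ e i * e i = q • 1) :
    ∀ l : List ι, l.Nodup → ∃ c : K, c ≠ 0 ∧ (l.map e).prod * (l.map e).prod = c • 1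
  | [], _ => ⟨1, one_ne_zero, by simp⟩
  | a :: t, hnodup => by
    classical
    obtain ⟨ha, ht⟩ := List.nodup_cons.mp hnodup
    obtain ⟨c, hc, hcc⟩ := exists_list_prod_map_mul_self_eq_smul_one hanti hsq t ht
    obtain ⟨q, hq, hqq⟩ := hsq a
    have hmove := mul_list_prod_map_eq_neg_one_pow_smul (K := K) hanti a t
    rw [List.countP_eq_length.mpr fun x hx => decide_eq_true (ne_of_mem_of_not_mem hx ha)] at hmove
    refine ⟨(-1) ^ t.length * (q * c), by simp [hq, hc], ?_⟩
    simp only [List.map_cons, List.prod_cons]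
    calc e a * (t.map e).prod * (e a * (t.map e).prod)
        = ((-1 : K) ^ t.length • ((t.map e).prod * e a)) * (e a * (t.map e).prod) := by
          rw [hmove]
      _ = (-1 : K) ^ t.length • ((t.map e).prod * (e a * e a) * (t.map e).prod) := by
          simp only [smul_mul_assoc, mul_assoc]
      _ = ((-1) ^ t.length * (q * c)) • 1 := by
          rw [hqq, mul_smul_one, smul_mul_assoc, hcc, smul_smul, smul_smul, mul_assoc]

variable [LinearOrder ι]

theorem mul_orderedProd_eq_neg_one_pow_smul
    (hanti : ∀ i j, i ≠ j → e i * e j = -(e j * e i)) (ρ : ι) (S : Finset ι) :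
    e ρ * orderedProd e S = (-1 : K) ^ #(S.erase ρ) • (orderedProd e S * e ρ) := by
  have hcount : (S.sort (· ≤ ·)).countP (· ≠ ρ) = #(S.erase ρ) := by
    rw [← filter_ne', ← Multiset.coe_countP, sort_eq, Multiset.countP_eq_card_filter]
    rfl
  rw [orderedProd, mul_list_prod_map_eq_neg_one_pow_smul (K := K) hanti, hcount]

theorem mul_orderedProd_mul_orderedProd_eq_neg_one_pow_smul
    (hanti : ∀ i j, i ≠ j → e i * e j = -(e j * e i))
    (ρ : ι) (S T : Finset ι) :
    e ρ * (orderedProd e S * orderedProd e T) =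
      (-1 : K) ^ (#(S.erase ρ) + #(T.erase ρ)) •
        (orderedProd e S * orderedProd e T * e ρ) := by
  rw [← mul_assoc, mul_orderedProd_eq_neg_one_pow_smul (K := K) hanti, smul_mul_assoc, mul_assoc,
    mul_orderedProd_eq_neg_one_pow_smul (K := K) hanti,
    mul_smul_comm, smul_smul, ← pow_add, mul_assoc]

theorem exists_orderedProd_mul_self_eq_smul_one [IsDomain K]
    (hanti : ∀ i j, i ≠ j → e i * e j = -(e j * e i))
    (hsq : ∀ i, ∃ q : K, q ≠ 0 ∧ e i * e i = q • 1) (S : Finset ι) :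
    ∃ c : K, c ≠ 0 ∧ orderedProd e S * orderedProd e S = c • 1 :=
  exists_list_prod_map_mul_self_eq_smul_one hanti hsq _ (S.sort_nodup _)

end Anticommuting

theorem card_erase_add_card_erase_mod_two [DecidableEq ι] (S T : Finset ι) (ρ : ι) :
    (#(S.erase ρ) + #(T.erase ρ)) % 2 =
      (#S + #T + (if ρ ∈ S then 1 else 0) + (if ρ ∈ T then 1 else 0)) % 2 := by
  have hS : ρ ∈ S → #(S.erase ρ) + 1 = #S := card_erase_add_one
  have hT : ρ ∈ T → #(T.erase ρ) + 1 = #T := card_erase_add_one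
  split_ifs with hρS hρT hρT <;>
    simp only [erase_eq_of_notMem, hρS, hρT, not_false_eq_true, forall_const] at hS hT ⊢ <;>
    omega

theorem exists_odd_card_erase_add_card_erase [Fintype ι] [DecidableEq ι]
    (hι : Even (Fintype.card ι)) {S T : Finset ι} (hST : S ≠ T) :
    ∃ ρ, Odd (#(S.erase ρ) + #(T.erase ρ)) := by
  simp only [Nat.odd_iff, card_erase_add_card_erase_mod_two]
  rcases Nat.even_or_odd (#S + #T) with hpar | hpar
  · obtain ⟨ρ, hρ⟩ : ∃ ρ, ¬(ρ ∈ S ↔ ρ ∈ T) := by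
      by_contra! h
      exact hST (ext h)
    refine ⟨ρ, ?_⟩
    rw [Nat.even_iff] at hpar
    split_ifs <;> first | omega | tauto
  · obtain ⟨ρ, hρ⟩ : ∃ ρ, (ρ ∈ S ↔ ρ ∈ T) := by
      by_contra! h
      have hT : T = Sᶜ := by
        ext ρ
        have := h ρ
        rw [mem_compl]
        tauto
      rw [hT, card_add_card_compl] at hpar
      exact Nat.not_odd_iff_even.2 hι hpar
    refine ⟨ρ, ?_⟩
    rw [Nat.odd_iff] at hpar
    split_ifs <;> first | omega | tauto

theorem Matrix.trace_eq_zero_of_mul_eq_neg_mul {n : Type*} [Fintype n] [DecidableEq n]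
    [CommRing K] [NoZeroDivisors K] [NeZero (2 : K)] {a P : Matrix n n K} {q : K} (hq : q ≠ 0)
    (ha : a * a = q • 1) (h : a * P = -(P * a)) : trace P = 0 := by
  have hscalar : trace (a * a * P) = q * trace P := by
    rw [ha, smul_mul_assoc, one_mul, trace_smul, smul_eq_mul]
  have hneg : trace (a * a * P) = -trace (a * a * P) := calc
    trace (a * a * P) = trace (a * (a * P)) := by rw [mul_assoc]
    _ = -trace (P * a * a) := by rw [h, mul_neg, trace_neg, trace_mul_comm]
    _ = -trace (a * a * P) := by rw [mul_assoc, trace_mul_comm]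
  have htwo : (2 * q) * trace P = 0 := by linear_combination hneg - 2 * hscalar
  exact (mul_eq_zero.1 htwo).resolve_left (mul_ne_zero two_ne_zero hq)

section Matrix

variable {n : Type*} [Fintype n] [DecidableEq n] [Fintype ι] [LinearOrder ι]

theorem trace_orderedProd_mul_orderedProd_of_ne [CommRing K] [NoZeroDivisors K]
    [NeZero (2 : K)] {e : ι → Matrix n n K}
    (hanti : ∀ i j, i ≠ j → e i * e j = -(e j * e i))
    (hsq : ∀ i, ∃ q : K, q ≠ 0 ∧ e i * e i = q • 1) (hι : Even (Fintype.card ι))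
    {S T : Finset ι} (hST : S ≠ T) :
    trace (orderedProd e S * orderedProd e T) = 0 := by
  obtain ⟨ρ, hodd⟩ := exists_odd_card_erase_add_card_erase hι hST
  obtain ⟨q, hq, hqq⟩ := hsq ρ
  refine trace_eq_zero_of_mul_eq_neg_mul hq hqq ?_
  rw [mul_orderedProd_mul_orderedProd_eq_neg_one_pow_smul (K := K) hanti, hodd.neg_one_pow,
    neg_one_smul]

theorem linearIndependent_orderedProd [Field K] [CharZero K] [Nonempty n]
    {e : ι → Matrix n n K}
    (hanti : ∀ i j, i ≠ j → e i * e j = -(e j * e i))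
    (hsq : ∀ i, ∃ q : K, q ≠ 0 ∧ e i * e i = q • 1) (hι : Even (Fintype.card ι)) :
    LinearIndependent K (orderedProd e) := by
  let B : LinearMap.BilinForm K (Matrix n n K) :=
    (LinearMap.mul K (Matrix n n K)).compr₂ (traceLinearMap n K K)
  refine LinearMap.BilinForm.linearIndependent_of_iIsOrtho (B := B)
    (LinearMap.BilinForm.iIsOrtho_def.2 fun S T hST =>
      trace_orderedProd_mul_orderedProd_of_ne hanti hsq hι hST) fun S => ?_
  obtain ⟨c, hc, hcc⟩ := exists_orderedProd_mul_self_eq_smul_one hanti hsq S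
  change trace (orderedProd e S * orderedProd e S) ≠ 0
  simp [hcc, hc]

end Matrix

/-- For `N` even, the `2^N` ordered products of distinct Clifford generators
(indexed by subsets of `{0,…,N-1}`) are linearly independent over `ℂ`;
consequently `d² ≥ 2^N`, i.e. `d ≥ 2^{N/2}`. -/
theorem cliffordProducts_linearIndependent {N d : ℕ} (hN : Even N) (hd : 0 < d)
    (γ : Fin N → Matrix (Fin d) (Fin d) ℂ)
    (hγ : ∀ μ ν : Fin N, γ μ * γ ν + γ ν * γ μ =
      (2 * (if μ = ν then (if (μ : ℕ) = 0 then (1 : ℂ) else -1) else 0)) • 1) :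
    LinearIndependent ℂ
      (fun S : Finset (Fin N) => ((S.sort (· ≤ ·)).map γ).prod) ∧
    2 ^ N ≤ d ^ 2 ∧ 2 ^ (N / 2) ≤ d := by
  have hanti : ∀ μ ν, μ ≠ ν → γ μ * γ ν = -(γ ν * γ μ) := fun μ ν hμν =>
    eq_neg_of_add_eq_zero_left (by simpa [hμν] using hγ μ ν)
  have hsq : ∀ μ, ∃ q : ℂ, q ≠ 0 ∧ γ μ * γ μ = q • 1 := fun μ =>
    ⟨if (μ : ℕ) = 0 then 1 else -1, by split_ifs <;> norm_num, by
      have h := hγ μ μ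
      rw [if_pos rfl, ← two_smul ℂ, mul_smul] at h
      exact smul_right_injective _ two_ne_zero h⟩
  have : Nonempty (Fin d) := ⟨⟨0, hd⟩⟩
  have hli : LinearIndependent ℂ (orderedProd γ) :=
    linearIndependent_orderedProd hanti hsq (by simpa using hN)
  have hcard : 2 ^ N ≤ d ^ 2 := by
    simpa [sq, Module.finrank_matrix] using hli.fintype_card_le_finrank
  refine ⟨hli, hcard, ?_⟩
  obtain ⟨k, rfl⟩ := hN
  rw [show (k + k) / 2 = k by omega]
  exact (Nat.pow_le_pow_iff_left two_ne_zero).1 (by rwa [← pow_mul, mul_two])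
end

section
/- Let γ^0,…,γ^3 be 4×4 complex matrices satisfying the Clifford relations with g = diag(1,-1,-1,-1), and let C be an invertible 4×4 matrix with C^{-1} γ^μ C = -(γ^μ)^T for all μ. Assume irreducibility (the commutant of {γ^μ} is scalar). Then C^T = -C, i.e. the charge conjugation matrix is antisymmetric. -/
/-!
Transposing `C⁻¹ γ^μ C = -(γ^μ)ᵀ` shows that `Cᵀ C⁻¹` commutes with every `γ^μ`, so by
irreducibility `Cᵀ = c C`, and transposing twice gives `c = ±1`. If `c = 1`, then `Γ C` is
antisymmetric for each of the ten products `Γ = γ^μ` and `Γ = γ^μ γ^ν` (`μ < ν`). These ten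
matrices are orthogonal for the trace form `(X, Y) ↦ tr (X Y)`, hence linearly independent: for
two distinct ones some `γ^δ` anticommutes with their product, which forces its trace to vanish.
But the antisymmetric 4×4 matrices only form a space of dimension 6.
-/

open Matrix

namespace Matrix

section CommRing

variable {n R : Type*} [Fintype n] [DecidableEq n] [CommRing R]

theorem commute_transpose_mul_nonsing_inv {A C : Matrix n n R} (hC : IsUnit C.det)
    (h : A * C = -(C * Aᵀ)) : Commute (Cᵀ * C⁻¹) A := by
  have hinv : C⁻¹ * A = -(Aᵀ * C⁻¹) :=
    calc C⁻¹ * A = C⁻¹ * (A * C) * C⁻¹ := by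
          rw [mul_assoc, mul_assoc, mul_nonsing_inv _ hC, mul_one]
      _ = -(Aᵀ * C⁻¹) := by rw [h, mul_neg, neg_mul, ← mul_assoc, nonsing_inv_mul _ hC, one_mul]
  have htr : Cᵀ * Aᵀ = -(A * Cᵀ) := by
    rw [← transpose_mul, h, transpose_neg, transpose_mul, transpose_transpose]
  calc Cᵀ * C⁻¹ * A = Cᵀ * (C⁻¹ * A) := mul_assoc _ _ _
    _ = A * (Cᵀ * C⁻¹) := by rw [hinv, mul_neg, ← mul_assoc, htr, neg_mul, neg_neg, mul_assoc]

end CommRing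

section Symmetric

variable {n R : Type*} [Fintype n] [CommRing R] {A B C : Matrix n n R}

theorem transpose_mul_eq_neg_of_transpose_eq (hC : Cᵀ = C) (hA : A * C = -(C * Aᵀ)) :
    (A * C)ᵀ = -(A * C) := by
  rw [transpose_mul, hC, hA, neg_neg]

theorem transpose_mul_mul_eq_of_transpose_eq (hC : Cᵀ = C) (hA : A * C = -(C * Aᵀ))
    (hB : B * C = -(C * Bᵀ)) : (A * B * C)ᵀ = B * A * C := by
  rw [transpose_mul, transpose_mul, hC, ← mul_assoc, ← neg_neg (C * Bᵀ), ← hB, neg_mul,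
    mul_assoc, ← neg_neg (C * Aᵀ), ← hA, mul_neg, neg_neg, mul_assoc]

end Symmetric

section Field

variable {n K : Type*} [Field K]

theorem eq_one_or_eq_neg_one_of_transpose_eq_smul {C : Matrix n n K} {c : K} (hC : C ≠ 0)
    (h : Cᵀ = c • C) : c = 1 ∨ c = -1 := by
  have : (c * c) • C = (1 : K) • C := by
    rw [one_smul, mul_smul, ← h, ← transpose_smul, ← h, transpose_transpose]
  exact mul_self_eq_one_iff.mp (smul_left_injective K hC this)

theorem linearIndependent_of_trace_mul [Fintype n] {ι : Type*} {v : ι → Matrix n n K}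
    (hortho : ∀ i j, i ≠ j → trace (v i * v j) = 0) (hself : ∀ i, trace (v i * v i) ≠ 0) :
    LinearIndependent K v := by
  classical
  rw [linearIndependent_iff']
  intro s w hs i hi
  have hsum : trace ((∑ j ∈ s, w j • v j) * v i) = w i * trace (v i * v i) := by
    simp only [Finset.sum_mul, smul_mul_assoc, trace_sum, trace_smul, smul_eq_mul]
    exact Finset.sum_eq_single_of_mem i hi fun j _ hji ↦ by rw [hortho j i hji, mul_zero]
  rw [hs, zero_mul, trace_zero] at hsum
  exact (mul_eq_zero.mp hsum.symm).resolve_right (hself i)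

variable [CharZero K]

theorem trace_eq_zero_of_mul_eq_neg [Fintype n] [DecidableEq n] {A X : Matrix n n K}
    (hA : IsUnit A) (h : A * X = -(X * A)) : trace X = 0 := by
  obtain ⟨u, rfl⟩ := hA
  refine self_eq_neg.mp ?_
  calc trace X = trace (↑u⁻¹ * (↑u * X)) := by rw [← mul_assoc, Units.inv_mul, one_mul]
    _ = -trace (X * ↑u * ↑u⁻¹) := by rw [h, mul_neg, trace_neg, trace_mul_comm]
    _ = -trace X := by rw [mul_assoc, Units.mul_inv, mul_one]

theorem eq_zero_of_transpose_eq_neg_of_forall_lt [LinearOrder n] {S : Matrix n n K}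
    (hS : Sᵀ = -S) (hlt : ∀ i j, i < j → S i j = 0) : S = 0 := by
  ext i j
  have hji : S j i = -S i j := congrFun (congrFun hS i) j
  rcases lt_trichotomy i j with h | rfl | h
  · exact hlt i j h
  · exact self_eq_neg.mp hji
  · rwa [hlt j i h, zero_eq_neg] at hji

theorem card_le_of_linearIndependent_of_transpose_eq_neg [Fintype n] [LinearOrder n] {ι : Type*}
    [Fintype ι] {v : ι → Matrix n n K} (hv : LinearIndependent K v) (hskew : ∀ i, (v i)ᵀ = -v i) :
    Fintype.card ι ≤ Fintype.card {p : n × n // p.1 < p.2} := by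
  have hupper : LinearIndependent K fun i (p : {p : n × n // p.1 < p.2}) ↦ v i p.1.1 p.1.2 := by
    rw [Fintype.linearIndependent_iff] at hv ⊢
    refine fun c hc ↦ hv c (eq_zero_of_transpose_eq_neg_of_forall_lt ?_ fun i j hij ↦ ?_)
    · simp [transpose_sum, hskew]
    · simpa [Matrix.sum_apply] using congrFun hc ⟨(i, j), hij⟩
  simpa using hupper.fintype_card_le_finrank

end Field

end Matrix

section Clifford

variable {n ι K : Type*} [Fintype n] [DecidableEq n] [DecidableEq ι] [Field K]

def IsCliffordFamily (g : ι → K) (γ : ι → Matrix n n K) : Prop :=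
  ∀ μ ν, γ μ * γ ν + γ ν * γ μ = (2 * if μ = ν then g μ else 0) • 1

namespace IsCliffordFamily

variable {g : ι → K} {γ : ι → Matrix n n K}

theorem anticomm (hγ : IsCliffordFamily g γ) {μ ν : ι} (h : μ ≠ ν) :
    γ μ * γ ν = -(γ ν * γ μ) := by
  simpa [h, add_eq_zero_iff_eq_neg] using hγ μ ν

theorem mul_listProd (hγ : IsCliffordFamily g γ) (δ : ι) (l : List ι) :
    γ δ * (l.map γ).prod = (-1 : K) ^ l.countP (· ≠ δ) • ((l.map γ).prod * γ δ) := by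
  induction l with
  | nil => simp
  | cons a l ih =>
    simp only [List.map_cons, List.prod_cons, List.countP_cons]
    by_cases h : a = δ
    · subst h
      simp only [ne_eq, not_true_eq_false, decide_false, Bool.false_eq_true, if_false,
        add_zero] at ih ⊢
      rw [mul_assoc (γ a), ih, mul_smul_comm]
    · simp only [ne_eq, h, not_false_eq_true, decide_true, if_true]
      rw [← mul_assoc, hγ.anticomm (Ne.symm h), neg_mul, mul_assoc, ih, pow_succ, mul_neg_one,
        neg_smul, mul_smul_comm, mul_assoc]

variable [CharZero K]

theorem mul_self (hγ : IsCliffordFamily g γ) (μ : ι) : γ μ * γ μ = g μ • 1 := by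
  have h := hγ μ μ
  rw [if_pos rfl, ← two_smul K, mul_smul] at h
  exact smul_right_injective _ two_ne_zero h

theorem isUnit (hγ : IsCliffordFamily g γ) {μ : ι} (hg : g μ ≠ 0) : IsUnit (γ μ) :=
  IsUnit.of_mul_eq_one ((g μ)⁻¹ • γ μ) <| by
    rw [mul_smul_comm, hγ.mul_self, smul_smul, inv_mul_cancel₀ hg, one_smul]

theorem trace_listProd_eq_zero (hγ : IsCliffordFamily g γ) {δ : ι} (hg : g δ ≠ 0) {l : List ι}
    (hl : Odd (l.countP (· ≠ δ))) : trace (l.map γ).prod = 0 :=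
  trace_eq_zero_of_mul_eq_neg (hγ.isUnit hg) <| by
    rw [hγ.mul_listProd, hl.neg_one_pow, neg_one_smul]

end IsCliffordFamily

end Clifford

def diracWord : Fin 4 ⊕ {p : Fin 4 × Fin 4 // p.1 < p.2} → List (Fin 4)
  | .inl μ => [μ]
  | .inr p => [p.1.1, p.1.2]

theorem exists_odd_countP_diracWord_append :
    ∀ i j, i ≠ j → ∃ δ : Fin 4, Odd ((diracWord i ++ diracWord j).countP (· ≠ δ)) := by
  decide

namespace IsCliffordFamily

variable {n K : Type*} [Fintype n] [DecidableEq n] [Field K] [CharZero K]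
  {g : Fin 4 → K} {γ : Fin 4 → Matrix n n K}

theorem exists_diracWord_mul_self_eq_smul_one (hγ : IsCliffordFamily g γ) (hg : ∀ μ, g μ ≠ 0)
    (i : Fin 4 ⊕ {p : Fin 4 × Fin 4 // p.1 < p.2}) :
    ∃ s : K, s ≠ 0 ∧ ((diracWord i).map γ).prod * ((diracWord i).map γ).prod = s • 1 := by
  rcases i with μ | ⟨⟨a, b⟩, hab⟩
  · exact ⟨g μ, hg μ, by simp [diracWord, hγ.mul_self]⟩
  · refine ⟨-(g a * g b), neg_ne_zero.mpr (mul_ne_zero (hg a) (hg b)), ?_⟩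
    calc γ a * (γ b * 1) * (γ a * (γ b * 1)) = -(γ a * γ a * (γ b * γ b)) := by
          rw [mul_one, mul_assoc, ← mul_assoc (γ b), hγ.anticomm hab.ne', neg_mul, mul_neg,
            mul_assoc, mul_assoc]
      _ = -(g a * g b) • 1 := by
          rw [hγ.mul_self, hγ.mul_self, smul_mul_smul_comm, one_mul, neg_smul]

theorem linearIndependent_diracWord [Nonempty n] (hγ : IsCliffordFamily g γ)
    (hg : ∀ μ, g μ ≠ 0) : LinearIndependent K fun i ↦ ((diracWord i).map γ).prod := by
  refine linearIndependent_of_trace_mul (fun i j hij ↦ ?_) fun i ↦ ?_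
  · obtain ⟨δ, hδ⟩ := exists_odd_countP_diracWord_append i j hij
    rw [← List.prod_append, ← List.map_append]
    exact hγ.trace_listProd_eq_zero (hg δ) hδ
  · obtain ⟨s, hs, hsq⟩ := hγ.exists_diracWord_mul_self_eq_smul_one hg i
    simp [hsq, hs]

theorem transpose_ne_self_of_mul_eq_neg {γ : Fin 4 → Matrix (Fin 4) (Fin 4) K}
    (hγ : IsCliffordFamily g γ) (hg : ∀ μ, g μ ≠ 0) {C : Matrix (Fin 4) (Fin 4) K}
    (hC : IsUnit C.det) (hγC : ∀ μ, γ μ * C = -(C * (γ μ)ᵀ)) : Cᵀ ≠ C := by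
  intro hsymm
  have hinj : LinearMap.ker (LinearMap.mulRight K C) = ⊥ :=
    LinearMap.ker_eq_bot.mpr ((isUnit_iff_isUnit_det C).mpr hC).mul_left_injective
  have hli := (hγ.linearIndependent_diracWord hg).map' _ hinj
  have hskew : ∀ i, (((diracWord i).map γ).prod * C)ᵀ = -(((diracWord i).map γ).prod * C) := by
    rintro (μ | ⟨⟨a, b⟩, hab⟩)
    · simpa [diracWord] using transpose_mul_eq_neg_of_transpose_eq hsymm (hγC μ)
    · simp only [diracWord, List.map_cons, List.map_nil, List.prod_cons, List.prod_nil, mul_one]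
      rw [transpose_mul_mul_eq_of_transpose_eq hsymm (hγC a) (hγC b),
        hγ.anticomm hab.ne', neg_mul]
  have hcard := card_le_of_linearIndependent_of_transpose_eq_neg hli hskew
  simp [Fintype.card_sum] at hcard

end IsCliffordFamily

/-- The charge-conjugation matrix `C`, defined by `C⁻¹ γ^μ C = -(γ^μ)ᵀ` for an
irreducible set of 4×4 Dirac matrices, is antisymmetric: `Cᵀ = -C`. -/
theorem chargeConjugation_antisymmetric
    (γ : Fin 4 → Matrix (Fin 4) (Fin 4) ℂ)
    (hγ : ∀ μ ν : Fin 4, γ μ * γ ν + γ ν * γ μ =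
      (2 * (if μ = ν then (if (μ : ℕ) = 0 then (1 : ℂ) else -1) else 0)) • 1)
    (C : Matrix (Fin 4) (Fin 4) ℂ) (hC : IsUnit C.det)
    (hCC : ∀ μ, C⁻¹ * γ μ * C = -(γ μ)ᵀ)
    (hirr : ∀ M : Matrix (Fin 4) (Fin 4) ℂ,
      (∀ μ, M * γ μ = γ μ * M) → ∃ c : ℂ, M = c • 1) :
    Cᵀ = -C := by
  have hcl : IsCliffordFamily (fun μ : Fin 4 ↦ if (μ : ℕ) = 0 then (1 : ℂ) else -1) γ := hγ
  have hg : ∀ μ : Fin 4, (if (μ : ℕ) = 0 then (1 : ℂ) else -1) ≠ 0 := fun μ ↦ by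
    split_ifs <;> norm_num
  have hγC : ∀ μ, γ μ * C = -(C * (γ μ)ᵀ) := fun μ ↦ by
    rw [← mul_neg, ← hCC μ, ← mul_assoc, ← mul_assoc, mul_nonsing_inv _ hC, one_mul]
  obtain ⟨c, hc⟩ := hirr _ fun μ ↦ (commute_transpose_mul_nonsing_inv hC (hγC μ)).eq
  have hCT : Cᵀ = c • C :=
    calc Cᵀ = Cᵀ * C⁻¹ * C := by rw [mul_assoc, nonsing_inv_mul _ hC, mul_one]
      _ = c • C := by rw [hc, smul_one_mul]
  have hC0 : C ≠ 0 := fun h ↦ by simp [h] at hC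
  rcases eq_one_or_eq_neg_one_of_transpose_eq_smul hC0 hCT with rfl | rfl
  · rw [one_smul] at hCT
    exact absurd hCT (hcl.transpose_ne_self_of_mul_eq_neg hg hC hγC)
  · rwa [neg_one_smul] at hCT
end
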